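/- arXiv:2605.07217 — 4 statements merged into one kernel-verified Lean document; each statement's English description precedes it below -/
import Mathlib

section
/- Suppose ρ, θ, φ : ℝ → ℝ are differentiable, with x' = n·cos θ, y' = n·sin θ, X' = cos φ, Y' = sin φ, and X = x + (ρ/n)·x', Y = y + (ρ/n)·y' hold for all t. Then ρ' = cos(φ − θ) − n and ρ·θ' = sin(φ − θ). -/
open Real

/-- Derivation of the reduced pursuit system: if the evader moves with unit speed in
direction `φ`, the pursuer moves with speed `n` in direction `θ`, and the pursuer's
velocity points at the evader at distance `ρ` (with `λ = ρ/n`), then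
`ρ' = cos (φ − θ) − n` and `ρ·θ' = sin (φ − θ)`. -/
theorem pursuit_reduced_system
    (x y X Y ρ θ φ : ℝ → ℝ) (n : ℝ) (hn : 0 < n)
    (hx : Differentiable ℝ x) (hy : Differentiable ℝ y)
    (hx' : Differentiable ℝ (deriv x)) (hy' : Differentiable ℝ (deriv y))
    (hX : Differentiable ℝ X) (hY : Differentiable ℝ Y)
    (hρ : Differentiable ℝ ρ) (hθ : Differentiable ℝ θ) (hφ : Differentiable ℝ φ)
    (hxv : ∀ t, deriv x t = n * Real.cos (θ t))
    (hyv : ∀ t, deriv y t = n * Real.sin (θ t))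
    (hXv : ∀ t, deriv X t = Real.cos (φ t))
    (hYv : ∀ t, deriv Y t = Real.sin (φ t))
    (hXp : ∀ t, X t = x t + (ρ t / n) * deriv x t)
    (hYp : ∀ t, Y t = y t + (ρ t / n) * deriv y t) :
    ∀ t, deriv ρ t = Real.cos (φ t - θ t) - n ∧
      ρ t * deriv θ t = Real.sin (φ t - θ t) := by
  have hn' : n ≠ 0 := ne_of_gt hn
  have hXf : X = fun t => x t + ρ t * Real.cos (θ t) := by
    funext t; rw [hXp t, hxv t]; field_simp
  have hYf : Y = fun t => y t + ρ t * Real.sin (θ t) := by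
    funext t; rw [hYp t, hyv t]; field_simp
  intro t
  have hθt := (hθ t).hasDerivAt
  have hρt := (hρ t).hasDerivAt
  have hcos : HasDerivAt (fun s => Real.cos (θ s)) (-Real.sin (θ t) * deriv θ t) t :=
    (Real.hasDerivAt_cos (θ t)).comp t hθt
  have hsin : HasDerivAt (fun s => Real.sin (θ s)) (Real.cos (θ t) * deriv θ t) t :=
    (Real.hasDerivAt_sin (θ t)).comp t hθt
  have hXd : HasDerivAt X
      (deriv x t + (deriv ρ t * Real.cos (θ t) + ρ t * (-Real.sin (θ t) * deriv θ t))) t := by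
    rw [hXf]; exact (hx t).hasDerivAt.add (hρt.mul hcos)
  have hYd : HasDerivAt Y
      (deriv y t + (deriv ρ t * Real.sin (θ t) + ρ t * (Real.cos (θ t) * deriv θ t))) t := by
    rw [hYf]; exact (hy t).hasDerivAt.add (hρt.mul hsin)
  have e1 : Real.cos (φ t) =
      n * Real.cos (θ t) + (deriv ρ t * Real.cos (θ t) + ρ t * (-Real.sin (θ t) * deriv θ t)) := by
    rw [← hXv t, hXd.deriv, hxv t]
  have e2 : Real.sin (φ t) =
      n * Real.sin (θ t) + (deriv ρ t * Real.sin (θ t) + ρ t * (Real.cos (θ t) * deriv θ t)) := by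
    rw [← hYv t, hYd.deriv, hyv t]
  have pyth := Real.sin_sq_add_cos_sq (θ t)
  constructor
  · rw [Real.cos_sub]
    linear_combination - Real.cos (θ t) * e1 - Real.sin (θ t) * e2 - (n + deriv ρ t) * pyth
  · rw [Real.sin_sub]
    linear_combination - Real.cos (θ t) * e2 + Real.sin (θ t) * e1 - (ρ t * deriv θ t) * pyth
end

section
/- Suppose the evader moves on the ellipse X²/a² + Y²/b² = 1 counterclockwise with unit speed and velocity direction φ, i.e. (X', Y') = (cos φ, sin φ). Then the position can be expressed as X = a²·sin φ / √(a²sin²φ + b²cos²φ) and Y = −b²·cos φ / √(a²sin²φ + b²cos²φ). -/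
/-!
Differentiating the constraint shows that the velocity `(cos φ, sin φ)` is tangent to the
ellipse, so the normal `(X / a², Y / b²)` is proportional to `(sin φ, -cos φ)`. The constraint
fixes the factor of proportionality up to sign, and the orientation fixes the sign, giving
`X sin φ - Y cos φ = √(a² sin² φ + b² cos² φ)`.
-/

open Real

lemma ellipse_tangent {a b t : ℝ} {X Y : ℝ → ℝ} (hX : DifferentiableAt ℝ X t)
    (hY : DifferentiableAt ℝ Y t) (hell : ∀ t, X t ^ 2 / a ^ 2 + Y t ^ 2 / b ^ 2 = 1) :
    X t * deriv X t / a ^ 2 + Y t * deriv Y t / b ^ 2 = 0 := by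
  have hderiv := ((hX.hasDerivAt.pow 2).div_const (a ^ 2)).add
    ((hY.hasDerivAt.pow 2).div_const (b ^ 2))
  have hconst : HasDerivAt (fun t => X t ^ 2 / a ^ 2 + Y t ^ 2 / b ^ 2) 0 t := by
    simpa only [hell] using hasDerivAt_const t (1 : ℝ)
  linear_combination hderiv.unique hconst / 2

lemma sq_mul_add_sq_mul_pos {a b s c : ℝ} (ha : a ≠ 0) (hb : b ≠ 0)
    (hsc : s ^ 2 + c ^ 2 = 1) :
    0 < a ^ 2 * s ^ 2 + b ^ 2 * c ^ 2 := by
  rcases eq_or_ne s 0 with rfl | hs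
  · have hc : c ^ 2 = 1 := by simpa using hsc
    rw [hc]
    positivity
  · positivity

lemma ellipse_point_eq_of_tangent {a b u v s c : ℝ} (ha : a ≠ 0) (hb : b ≠ 0)
    (hsc : s ^ 2 + c ^ 2 = 1) (hell : u ^ 2 / a ^ 2 + v ^ 2 / b ^ 2 = 1)
    (htan : u * c / a ^ 2 + v * s / b ^ 2 = 0) (hccw : 0 < u * s - v * c) :
    u = a ^ 2 * s / √(a ^ 2 * s ^ 2 + b ^ 2 * c ^ 2) ∧
      v = -(b ^ 2 * c) / √(a ^ 2 * s ^ 2 + b ^ 2 * c ^ 2) := by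
  set S := a ^ 2 * s ^ 2 + b ^ 2 * c ^ 2
  set w := u * s - v * c
  have hS : 0 < S := sq_mul_add_sq_mul_pos ha hb hsc
  field_simp at hell htan
  have hu : S * u = a ^ 2 * s * w := by linear_combination c * htan
  have hv : S * v = -(b ^ 2 * c) * w := by linear_combination s * htan
  have hw : w ^ 2 = S := by
    have key : a ^ 2 * b ^ 2 * S * (w ^ 2 - S) = 0 := by
      linear_combination (-(b ^ 2) * (S * u + a ^ 2 * s * w)) * hu
        + (-(a ^ 2) * (S * v - b ^ 2 * c * w)) * hv + S ^ 2 * hell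
    have hne : a ^ 2 * b ^ 2 * S ≠ 0 := by positivity
    exact sub_eq_zero.mp ((mul_eq_zero.mp key).resolve_left hne)
  have hw0 : w ≠ 0 := hccw.ne'
  rw [← hw, sqrt_sq hccw.le, eq_div_iff hw0, eq_div_iff hw0]
  constructor
  · exact mul_right_cancel₀ hw0 (by linear_combination hu + u * hw)
  · exact mul_right_cancel₀ hw0 (by linear_combination hv + v * hw)

theorem ellipse_position_from_direction_general (a b : ℝ) (ha : 0 < a) (hb : 0 < b)
    (X Y φ : ℝ → ℝ)
    (hX : Differentiable ℝ X) (hY : Differentiable ℝ Y)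
    (hell : ∀ t, X t ^ 2 / a ^ 2 + Y t ^ 2 / b ^ 2 = 1)
    (hXv : ∀ t, deriv X t = Real.cos (φ t))
    (hYv : ∀ t, deriv Y t = Real.sin (φ t))
    (hccw : ∀ t, X t * deriv Y t - Y t * deriv X t > 0) :
    ∀ t, X t = a ^ 2 * Real.sin (φ t) /
        Real.sqrt (a ^ 2 * Real.sin (φ t) ^ 2 + b ^ 2 * Real.cos (φ t) ^ 2) ∧
      Y t = -(b ^ 2 * Real.cos (φ t)) /
        Real.sqrt (a ^ 2 * Real.sin (φ t) ^ 2 + b ^ 2 * Real.cos (φ t) ^ 2) := by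
  intro t
  have htan := ellipse_tangent (hX t) (hY t) hell
  have horient := hccw t
  rw [hXv, hYv] at htan horient
  exact ellipse_point_eq_of_tangent ha.ne' hb.ne' (sin_sq_add_cos_sq (φ t)) (hell t) htan
    horient

/-- If the evader moves counterclockwise on the ellipse `X²/a² + Y²/b² = 1` with unit
speed and velocity direction `φ`, then its position is
`X = a²sinφ/√(a²sin²φ + b²cos²φ)`, `Y = −b²cosφ/√(a²sin²φ + b²cos²φ)`. -/
theorem ellipse_position_from_direction (a b : ℝ) (ha : 0 < a) (hb : 0 < b) (hab : a ≠ b)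
    (X Y φ : ℝ → ℝ)
    (hX : Differentiable ℝ X) (hY : Differentiable ℝ Y) (hφ : Differentiable ℝ φ)
    (hell : ∀ t, X t ^ 2 / a ^ 2 + Y t ^ 2 / b ^ 2 = 1)
    (hXv : ∀ t, deriv X t = Real.cos (φ t))
    (hYv : ∀ t, deriv Y t = Real.sin (φ t))
    (hccw : ∀ t, X t * deriv Y t - Y t * deriv X t > 0) :
    ∀ t, X t = a ^ 2 * Real.sin (φ t) /
        Real.sqrt (a ^ 2 * Real.sin (φ t) ^ 2 + b ^ 2 * Real.cos (φ t) ^ 2) ∧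
      Y t = -(b ^ 2 * Real.cos (φ t)) /
        Real.sqrt (a ^ 2 * Real.sin (φ t) ^ 2 + b ^ 2 * Real.cos (φ t) ^ 2) :=
  ellipse_position_from_direction_general a b ha hb X Y φ hX hY hell hXv hYv hccw
end

section
/- Under the elliptical unit-speed parametrization with direction angle φ, the angular velocity satisfies dφ/dt = (a²sin²φ + b²cos²φ)^{3/2}/(a²b²). -/
/-!
The evader sits at the point of the ellipse `x²/a² + y²/b² = 1` whose tangent has direction
`(cos φ, sin φ)`, and `h(φ) = √(a² sin²φ + b² cos²φ)` is the support function of the ellipse in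
the normal direction `(sin φ, -cos φ)`. Differentiating the parametrization in `φ` gives
`d(X, Y)/dφ = (a²b²/h³) (cos φ, sin φ)`: the radius of curvature is `a²b²/h³`. Since the
velocity is the unit vector `(cos φ, sin φ)`, the chain rule forces `(a²b²/h³) dφ/dt = 1`.
-/

open Real

lemma rpow_three_halves_eq_mul_sqrt {x : ℝ} (hx : 0 ≤ x) : x ^ (3 / 2 : ℝ) = x * √x := by
  rw [show (3 / 2 : ℝ) = 1 + 1 / 2 by norm_num, rpow_add' hx (by norm_num), rpow_one,
    sqrt_eq_rpow]

lemma eq_one_of_mul_cos_eq_of_mul_sin_eq {k θ : ℝ} (hc : k * cos θ = cos θ)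
    (hs : k * sin θ = sin θ) : k = 1 := by
  linear_combination cos θ * hc + sin θ * hs + (1 - k) * sin_sq_add_cos_sq θ

noncomputable def ellipseSupportSq (a b θ : ℝ) : ℝ := a ^ 2 * sin θ ^ 2 + b ^ 2 * cos θ ^ 2

lemma ellipseSupportSq_sub_sin_sq (a b θ : ℝ) :
    ellipseSupportSq a b θ - (a ^ 2 - b ^ 2) * sin θ ^ 2 = b ^ 2 := by
  unfold ellipseSupportSq
  linear_combination b ^ 2 * sin_sq_add_cos_sq θ

lemma ellipseSupportSq_add_cos_sq (a b θ : ℝ) :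
    ellipseSupportSq a b θ + (a ^ 2 - b ^ 2) * cos θ ^ 2 = a ^ 2 := by
  unfold ellipseSupportSq
  linear_combination a ^ 2 * sin_sq_add_cos_sq θ

lemma hasDerivAt_ellipseSupportSq (a b θ : ℝ) :
    HasDerivAt (ellipseSupportSq a b) (2 * (a ^ 2 - b ^ 2) * sin θ * cos θ) θ := by
  have h := (((hasDerivAt_sin θ).pow 2).const_mul (a ^ 2)).add
    (((hasDerivAt_cos θ).pow 2).const_mul (b ^ 2))
  exact h.congr_deriv (by ring)

section

variable {a b : ℝ}

lemma ellipseSupportSq_pos (ha : a ≠ 0) (hb : b ≠ 0) (θ : ℝ) : 0 < ellipseSupportSq a b θ := by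
  unfold ellipseSupportSq
  rcases eq_or_ne (sin θ) 0 with hs | hs
  · have hc : cos θ ≠ 0 := fun hc => by simpa [hs, hc] using sin_sq_add_cos_sq θ
    positivity
  · positivity

lemma hasDerivAt_sqrt_ellipseSupportSq (ha : a ≠ 0) (hb : b ≠ 0) (θ : ℝ) :
    HasDerivAt (fun θ ↦ √(ellipseSupportSq a b θ))
      ((a ^ 2 - b ^ 2) * sin θ * cos θ / √(ellipseSupportSq a b θ)) θ := by
  have h := (hasDerivAt_ellipseSupportSq a b θ).sqrt (ellipseSupportSq_pos ha hb θ).ne'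
  exact h.congr_deriv (by ring)

lemma hasDerivAt_sin_div_sqrt_ellipseSupportSq (ha : a ≠ 0) (hb : b ≠ 0) (θ : ℝ) :
    HasDerivAt (fun θ ↦ a ^ 2 * sin θ / √(ellipseSupportSq a b θ))
      (a ^ 2 * b ^ 2 * cos θ / ellipseSupportSq a b θ ^ (3 / 2 : ℝ)) θ := by
  have hS := ellipseSupportSq_pos ha hb θ
  have hq := sqrt_pos.2 hS
  have h := ((hasDerivAt_sin θ).const_mul (a ^ 2)).div
    (hasDerivAt_sqrt_ellipseSupportSq ha hb θ) hq.ne'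
  refine h.congr_deriv ?_
  rw [rpow_three_halves_eq_mul_sqrt hS.le]
  field_simp
  rw [sq_sqrt hS.le]
  linear_combination cos θ * ellipseSupportSq a b θ * ellipseSupportSq_sub_sin_sq a b θ

lemma hasDerivAt_neg_cos_div_sqrt_ellipseSupportSq (ha : a ≠ 0) (hb : b ≠ 0) (θ : ℝ) :
    HasDerivAt (fun θ ↦ -(b ^ 2 * cos θ) / √(ellipseSupportSq a b θ))
      (a ^ 2 * b ^ 2 * sin θ / ellipseSupportSq a b θ ^ (3 / 2 : ℝ)) θ := by
  have hS := ellipseSupportSq_pos ha hb θ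
  have hq := sqrt_pos.2 hS
  have h := ((hasDerivAt_cos θ).const_mul (b ^ 2)).neg.div
    (hasDerivAt_sqrt_ellipseSupportSq ha hb θ) hq.ne'
  refine h.congr_deriv ?_
  rw [rpow_three_halves_eq_mul_sqrt hS.le]
  simp only [Pi.neg_apply]
  field_simp
  rw [sq_sqrt hS.le]
  linear_combination sin θ * ellipseSupportSq a b θ * ellipseSupportSq_add_cos_sq a b θ

end

theorem ellipse_angular_velocity_general (a b : ℝ) (ha : 0 < a) (hb : 0 < b)
    (X Y φ : ℝ → ℝ)
    (hφ : Differentiable ℝ φ)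
    (hXpos : ∀ t, X t = a ^ 2 * Real.sin (φ t) /
        Real.sqrt (a ^ 2 * Real.sin (φ t) ^ 2 + b ^ 2 * Real.cos (φ t) ^ 2))
    (hYpos : ∀ t, Y t = -(b ^ 2 * Real.cos (φ t)) /
        Real.sqrt (a ^ 2 * Real.sin (φ t) ^ 2 + b ^ 2 * Real.cos (φ t) ^ 2))
    (hXv : ∀ t, deriv X t = Real.cos (φ t))
    (hYv : ∀ t, deriv Y t = Real.sin (φ t)) :
    ∀ t, deriv φ t =
      (a ^ 2 * Real.sin (φ t) ^ 2 + b ^ 2 * Real.cos (φ t) ^ 2) ^ ((3 : ℝ) / 2)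
        / (a ^ 2 * b ^ 2) := by
  intro t
  have hS : 0 < ellipseSupportSq a b (φ t) := ellipseSupportSq_pos ha.ne' hb.ne' (φ t)
  set k := a ^ 2 * b ^ 2 / ellipseSupportSq a b (φ t) ^ (3 / 2 : ℝ) with hk
  have hX : X = (fun θ ↦ a ^ 2 * sin θ / √(ellipseSupportSq a b θ)) ∘ φ := funext hXpos
  have hY : Y = (fun θ ↦ -(b ^ 2 * cos θ) / √(ellipseSupportSq a b θ)) ∘ φ := funext hYpos
  have hXt : deriv X t = k * cos (φ t) * deriv φ t := by
    rw [hX, ((hasDerivAt_sin_div_sqrt_ellipseSupportSq ha.ne' hb.ne' (φ t)).comp t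
      (hφ t).hasDerivAt).deriv]
    ring
  have hYt : deriv Y t = k * sin (φ t) * deriv φ t := by
    rw [hY, ((hasDerivAt_neg_cos_div_sqrt_ellipseSupportSq ha.ne' hb.ne' (φ t)).comp t
      (hφ t).hasDerivAt).deriv]
    ring
  have hunit : k * deriv φ t = 1 := eq_one_of_mul_cos_eq_of_mul_sin_eq
    (by rw [mul_right_comm, ← hXt, hXv]) (by rw [mul_right_comm, ← hYt, hYv])
  rw [hk, div_mul_eq_mul_div, div_eq_one_iff_eq (by positivity)] at hunit
  exact eq_div_of_mul_eq (by positivity) (by rw [mul_comm]; exact hunit)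

/-- Under the elliptical unit-speed parametrization with direction angle `φ`,
the angular velocity satisfies `dφ/dt = (a²sin²φ + b²cos²φ)^{3/2}/(a²b²)`. -/
theorem ellipse_angular_velocity (a b : ℝ) (ha : 0 < a) (hb : 0 < b) (hab : a ≠ b)
    (X Y φ : ℝ → ℝ)
    (hX : Differentiable ℝ X) (hY : Differentiable ℝ Y) (hφ : Differentiable ℝ φ)
    (hmono : StrictMono φ)
    (hXpos : ∀ t, X t = a ^ 2 * Real.sin (φ t) /
        Real.sqrt (a ^ 2 * Real.sin (φ t) ^ 2 + b ^ 2 * Real.cos (φ t) ^ 2))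
    (hYpos : ∀ t, Y t = -(b ^ 2 * Real.cos (φ t)) /
        Real.sqrt (a ^ 2 * Real.sin (φ t) ^ 2 + b ^ 2 * Real.cos (φ t) ^ 2))
    (hXv : ∀ t, deriv X t = Real.cos (φ t))
    (hYv : ∀ t, deriv Y t = Real.sin (φ t)) :
    ∀ t, deriv φ t =
      (a ^ 2 * Real.sin (φ t) ^ 2 + b ^ 2 * Real.cos (φ t) ^ 2) ^ ((3 : ℝ) / 2)
        / (a ^ 2 * b ^ 2) :=
  ellipse_angular_velocity_general a b ha hb X Y φ hφ hXpos hYpos hXv hYv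
end

section
/- Let z₁, z₂ : ℝ → ℂ∖{0} be differentiable solutions of dz/dφ = 1/f(φ) − (n/f(φ))·z/|z| + i·z, with f positive. Then L(φ) := |z₁(φ) − z₂(φ)|² satisfies dL/dφ = −(2n/f(φ))·(|z₁| + |z₂|)·(1 − cos(ζ₁ − ζ₂)), where ζⱼ = arg zⱼ; in particular dL/dφ ≤ 0, so L is non-increasing. -/
/-!
Differentiating `L = ‖z₁ - z₂‖²` gives `2⟪z₁ - z₂, z₁' - z₂'⟫`. In the difference of the two
right-hand sides the forcing term `1/f` cancels and the rotation `i z` contributes nothing, being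
orthogonal to `z₁ - z₂`; what is left is `-(n/f)⟪a - b, a/‖a‖ - b/‖b‖⟫`, and for `a, b ≠ 0`
this inner product equals `(‖a‖ + ‖b‖)(1 - cos(arg a - arg b)) ≥ 0`: normalization `z ↦ z/‖z‖`
is a monotone map.
-/

open Complex

open RealInnerProductSpace in
theorem inner_sub_smul_norm_inv_sub {E : Type*} [NormedAddCommGroup E] [InnerProductSpace ℝ E]
    {a b : E} (ha : a ≠ 0) (hb : b ≠ 0) :
    ⟪a - b, ‖a‖⁻¹ • a - ‖b‖⁻¹ • b⟫ = (‖a‖ + ‖b‖) * (1 - ⟪a, b⟫ / (‖a‖ * ‖b‖)) := by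
  have ha' : ‖a‖ ≠ 0 := norm_ne_zero_iff.mpr ha
  have hb' : ‖b‖ ≠ 0 := norm_ne_zero_iff.mpr hb
  simp only [inner_sub_left, inner_sub_right, real_inner_smul_right, real_inner_self_eq_norm_sq,
    real_inner_comm a b]
  field_simp
  ring

namespace Complex

open RealInnerProductSpace

theorem real_inner_eq_norm_mul_norm_mul_cos_arg_sub (a b : ℂ) :
    ⟪a, b⟫ = ‖a‖ * ‖b‖ * Real.cos (arg a - arg b) := by
  simp only [Complex.inner, Real.cos_sub, mul_re, conj_re, conj_im, ← norm_mul_cos_arg a,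
    ← norm_mul_cos_arg b, ← norm_mul_sin_arg a, ← norm_mul_sin_arg b]
  ring

theorem real_inner_I_mul_self (w : ℂ) : ⟪w, I * w⟫ = 0 := by
  simp only [Complex.inner, mul_re, I_re, I_im, mul_im, conj_re, conj_im]
  ring

noncomputable def pursuitField (c κ : ℝ) (z : ℂ) : ℂ :=
  (c : ℂ) - (κ : ℂ) * (z / (‖z‖ : ℂ)) + I * z

theorem pursuitField_sub (c κ : ℝ) (a b : ℂ) :
    pursuitField c κ a - pursuitField c κ b = -κ • (‖a‖⁻¹ • a - ‖b‖⁻¹ • b) + I * (a - b) := by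
  simp only [pursuitField, real_smul, ofReal_neg, ofReal_inv]
  ring

theorem real_inner_sub_pursuitField_sub (c κ : ℝ) {a b : ℂ} (ha : a ≠ 0) (hb : b ≠ 0) :
    ⟪a - b, pursuitField c κ a - pursuitField c κ b⟫
      = -κ * (‖a‖ + ‖b‖) * (1 - Real.cos (arg a - arg b)) := by
  have hnorm : ‖a‖ * ‖b‖ ≠ 0 := by positivity
  rw [pursuitField_sub, inner_add_right, real_inner_smul_right, real_inner_I_mul_self,
    inner_sub_smul_norm_inv_sub ha hb, real_inner_eq_norm_mul_norm_mul_cos_arg_sub,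
    mul_div_cancel_left₀ _ hnorm]
  ring

end Complex

/-- Contraction of the squared distance between two solutions of the complex pursuit
ODE: `L := |z₁ − z₂|²` satisfies
`dL/dφ = −(2n/f)(|z₁| + |z₂|)(1 − cos(ζ₁ − ζ₂)) ≤ 0`, where `ζⱼ = arg zⱼ`. -/
theorem squared_distance_decreasing (n : ℝ) (hn : 0 < n)
    (f : ℝ → ℝ) (hfpos : ∀ φ, 0 < f φ)
    (z₁ z₂ : ℝ → ℂ) (hz₁ : Differentiable ℝ z₁) (hz₂ : Differentiable ℝ z₂)
    (hz₁0 : ∀ φ, z₁ φ ≠ 0) (hz₂0 : ∀ φ, z₂ φ ≠ 0)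
    (hode₁ : ∀ φ, deriv z₁ φ =
      ((1 / f φ : ℝ) : ℂ) - ((n / f φ : ℝ) : ℂ) * (z₁ φ / ((‖z₁ φ‖ : ℝ) : ℂ))
        + Complex.I * z₁ φ)
    (hode₂ : ∀ φ, deriv z₂ φ =
      ((1 / f φ : ℝ) : ℂ) - ((n / f φ : ℝ) : ℂ) * (z₂ φ / ((‖z₂ φ‖ : ℝ) : ℂ))
        + Complex.I * z₂ φ)
    (L : ℝ → ℝ) (hL : ∀ φ, L φ = ‖z₁ φ - z₂ φ‖ ^ 2) :
    ∀ φ, deriv L φ = -(2 * n / f φ) * (‖z₁ φ‖ + ‖z₂ φ‖)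
        * (1 - Real.cos (Complex.arg (z₁ φ) - Complex.arg (z₂ φ))) ∧
      deriv L φ ≤ 0 := by
  intro φ
  have hderiv : deriv L φ = -(2 * n / f φ) * (‖z₁ φ‖ + ‖z₂ φ‖)
      * (1 - Real.cos (Complex.arg (z₁ φ) - Complex.arg (z₂ φ))) := by
    rw [funext hL, ((hz₁ φ).hasDerivAt.fun_sub (hz₂ φ).hasDerivAt).norm_sq.deriv, hode₁, hode₂,
      ← pursuitField, ← pursuitField, real_inner_sub_pursuitField_sub _ _ (hz₁0 φ) (hz₂0 φ)]
    ring
  refine ⟨hderiv, ?_⟩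
  have hcoeff : 0 ≤ 2 * n / f φ * (‖z₁ φ‖ + ‖z₂ φ‖) := by
    have := hfpos φ
    positivity
  rw [hderiv, neg_mul, neg_mul, neg_nonpos]
  exact mul_nonneg hcoeff (sub_nonneg.mpr (Real.cos_le_one _))
end
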